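/- arXiv:1612.06480 — 2 statements merged into one kernel-verified Lean document; each statement's English description precedes it below -/
import Mathlib

section
/- (Zograf-type infinite product F_n as a ratio of Selberg zeta functions.) Let n ∈ ℕ with n ≥ 1 and s ∈ ℂ with Re(s) > 2 − n. Then the family over (i, k) ∈ I × {k ∈ ℕ : k ≥ n} given by (1 − exp(−k(ℓ i + i·θ i))·exp(−s·ℓ i)) is multipliable; denoting its product by F_n(s) = ∏_{k ≥ n} R(−2k, s + k), one has Z(−2(n−1), s + n + 1) ≠ 0 and F_n(s) = Z(−2n, s + n) / Z(−2(n−1), s + n + 1). -/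
/-!
Write `T(i, p, q) = exp (-((p + n)(ℓᵢ + iθᵢ) + q(ℓᵢ - iθᵢ) + s ℓᵢ))`. Absorbing the twist
`exp (i(k/2)θᵢ)` into the exponent, the factors of `Z(-2n, s + n)` are exactly the `1 - T(i, p, q)`,
those of `Z(-2(n-1), s + n + 1)` are the `1 - T(i, p, q + 1)`, and those of `F_n(s)` are the
`1 - T(i, p, 0)`. So `Z(-2n, s + n)` is `F_n(s)` times `Z(-2(n-1), s + n + 1)`. All three products
converge absolutely to nonzero values since `‖T(i, p, q)‖ = exp (-(p + q + n + Re s) ℓᵢ)`,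
`n + Re s > 2 > δ`, and summability of `exp (-δ ℓᵢ)` forces the lengths `ℓᵢ` to be bounded away
from `0`.
-/

/-- `R(σ_k, s) = ∏_{i ∈ I} (1 − e^{i(k/2)θ_i} e^{−s ℓ_i})`. -/
noncomputable def Rz {I : Type*} (ℓ θ : I → ℝ) (k : ℤ) (s : ℂ) : ℂ :=
  ∏' i : I, (1 - Complex.exp (Complex.I * ((k : ℂ) / 2) * (θ i : ℂ))
    * Complex.exp (-s * (ℓ i : ℂ)))

/-- Selberg zeta function
`Z(σ_k, s) = ∏_{i ∈ I} ∏_{p,q ≥ 0} (1 − e^{i(k/2)θ_i} e^{−p(ℓ_i+iθ_i)} e^{−q(ℓ_i−iθ_i)} e^{−s ℓ_i})`. -/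
noncomputable def Zs {I : Type*} (ℓ θ : I → ℝ) (k : ℤ) (s : ℂ) : ℂ :=
  ∏' x : I × ℕ × ℕ,
    (1 - Complex.exp (Complex.I * ((k : ℂ) / 2) * (θ x.1 : ℂ))
       * Complex.exp (-(x.2.1 : ℂ) * ((ℓ x.1 : ℂ) + Complex.I * (θ x.1 : ℂ)))
       * Complex.exp (-(x.2.2 : ℂ) * ((ℓ x.1 : ℂ) - Complex.I * (θ x.1 : ℂ)))
       * Complex.exp (-s * (ℓ x.1 : ℂ)))

open Filter

section Products

variable {ι : Type*}

def sumProdNatEquiv (ι : Type*) : ι ⊕ ι × ℕ ≃ ι × ℕ where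
  toFun := Sum.elim (fun i => (i, 0)) (fun x => (x.1, x.2 + 1))
  invFun x := Nat.casesOn x.2 (Sum.inl x.1) (fun q => Sum.inr (x.1, q))
  left_inv := by rintro (i | ⟨i, q⟩) <;> rfl
  right_inv := by rintro ⟨i, _ | q⟩ <;> rfl

theorem tprod_prod_nat_eq_zero_mul {M : Type*} [CommMonoid M] [TopologicalSpace M]
    [ContinuousMul M] [T2Space M] {f : ι × ℕ → M} (h₀ : Multipliable fun i => f (i, 0))
    (h₁ : Multipliable fun x : ι × ℕ => f (x.1, x.2 + 1)) :
    ∏' x, f x = (∏' i, f (i, 0)) * ∏' x : ι × ℕ, f (x.1, x.2 + 1) := by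
  rw [← (sumProdNatEquiv ι).tprod_eq]
  exact Multipliable.tprod_sum h₀ h₁

variable {R : Type*} [NormedCommRing R] [NormOneClass R] [CompleteSpace R] {w : ι → R}

theorem multipliable_one_sub_of_summable (hw : Summable (‖w ·‖)) :
    Multipliable fun i => 1 - w i := by
  simpa only [sub_eq_add_neg] using
    multipliable_one_add_of_summable (f := fun i => -w i) (by simpa only [norm_neg] using hw)

theorem tprod_one_sub_ne_zero_of_summable [NormMulClass R] (hw : Summable (‖w ·‖))
    (hw₁ : ∀ i, 1 - w i ≠ 0) : ∏' i, (1 - w i) ≠ 0 := by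
  simpa only [sub_eq_add_neg] using
    tprod_one_add_ne_zero_of_summable (f := fun i => -w i)
      (by simpa only [sub_eq_add_neg] using hw₁) (by simpa only [norm_neg] using hw)

end Products

def natEquivSubtypeLE (n : ℕ) : ℕ ≃ {k : ℕ // n ≤ k} where
  toFun p := ⟨p + n, Nat.le_add_left n p⟩
  invFun k := k - n
  left_inv p := Nat.add_sub_cancel p n
  right_inv k := Subtype.ext (Nat.sub_add_cancel k.2)

section Lengths

variable {I : Type*} {ℓ : I → ℝ} {δ : ℝ}

theorem exists_pos_le_of_summable_exp (hℓ : ∀ i, 0 < ℓ i)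
    (hsum : Summable fun i => Real.exp (-δ * ℓ i)) : ∃ c > 0, ∀ i, c ≤ ℓ i := by
  -- with a positive exponent, `exp (-δ' ℓᵢ) → 0` forces `ℓᵢ → ∞`
  have hδ' : Summable fun i => Real.exp (-max δ 1 * ℓ i) :=
    hsum.of_nonneg_of_le (fun _ => (Real.exp_pos _).le) fun i =>
      Real.exp_le_exp.2 (by nlinarith [le_max_left δ 1, hℓ i])
  have hℓ_top : Tendsto ℓ cofinite atTop :=
    (tendsto_const_mul_atBot_of_neg (by simp)).1
      (Real.tendsto_exp_comp_nhds_zero.1 hδ'.tendsto_cofinite_zero)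
  rcases isEmpty_or_nonempty I with hI | hI
  · exact ⟨1, one_pos, isEmptyElim⟩
  · obtain ⟨i₀, hi₀⟩ := hℓ_top.exists_forall_le
    exact ⟨ℓ i₀, hℓ i₀, hi₀⟩

theorem summable_exp_neg_nat_add_mul {c a : ℝ} (hc : 0 < c) (hcℓ : ∀ i, c ≤ ℓ i)
    (hsum : Summable fun i => Real.exp (-δ * ℓ i)) (hδa : δ ≤ a) :
    Summable fun x : (I × ℕ) × ℕ => Real.exp (-((x.1.2 + x.2 : ℝ) + a) * ℓ x.1.1) := by
  -- dominated by `exp (-δ ℓᵢ) * exp (-c) ^ p * exp (-c) ^ q`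
  have hgeom : Summable fun p : ℕ => Real.exp (-c) ^ p :=
    summable_geometric_of_lt_one (Real.exp_pos _).le (Real.exp_lt_one_iff.2 (neg_lt_zero.2 hc))
  refine ((hsum.mul_of_nonneg hgeom (fun _ => (Real.exp_pos _).le)
    (fun _ => by positivity)).mul_of_nonneg hgeom (fun _ => by positivity)
    (fun _ => by positivity)).of_nonneg_of_le (fun _ => (Real.exp_pos _).le) fun ⟨⟨i, p⟩, q⟩ => ?_
  simp only [← Real.exp_nat_mul, ← Real.exp_add]
  exact Real.exp_le_exp.2
    (by nlinarith [hcℓ i, Nat.cast_nonneg (α := ℝ) p, Nat.cast_nonneg (α := ℝ) q])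

end Lengths

namespace ZografProduct

open Complex

variable {ι : Type*} (ℓ θ : ι → ℝ) (n : ℕ) (s : ℂ)

noncomputable def term (x : (ι × ℕ) × ℕ) : ℂ :=
  exp (-(((x.1.2 + n : ℕ) : ℂ) * (ℓ x.1.1 + I * θ x.1.1) + x.2 * (ℓ x.1.1 - I * θ x.1.1)
    + s * ℓ x.1.1))

theorem Zs_eq_tprod_term : Zs ℓ θ (-2 * n) (s + n) = ∏' x, (1 - term ℓ θ n s x) := by
  rw [Zs, ← (Equiv.prodAssoc ι ℕ ℕ).tprod_eq]
  refine tprod_congr fun x => ?_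
  simp only [term, Equiv.prodAssoc_apply, ← exp_add]
  congr 2
  push_cast
  ring

theorem Zs_eq_tprod_term_succ :
    Zs ℓ θ (-2 * (n - 1)) (s + n + 1) = ∏' x : (ι × ℕ) × ℕ, (1 - term ℓ θ n s (x.1, x.2 + 1)) := by
  rw [Zs, ← (Equiv.prodAssoc ι ℕ ℕ).tprod_eq]
  refine tprod_congr fun x => ?_
  simp only [term, Equiv.prodAssoc_apply, ← exp_add]
  congr 2
  push_cast
  ring

theorem one_sub_exp_mul_exp_eq_one_sub_term (b : ι × ℕ) :
    1 - exp (-((natEquivSubtypeLE n b.2 : ℕ) : ℂ) * (ℓ b.1 + I * θ b.1)) * exp (-s * ℓ b.1) =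
      1 - term ℓ θ n s (b, 0) := by
  simp only [term, natEquivSubtypeLE, Equiv.coe_fn_mk, ← exp_add]
  congr 2
  push_cast
  ring

theorem norm_term (x : (ι × ℕ) × ℕ) :
    ‖term ℓ θ n s x‖ = Real.exp (-((x.1.2 + x.2 : ℝ) + (n + s.re)) * ℓ x.1.1) := by
  rw [term, norm_exp]
  congr 1
  simp only [Nat.cast_add, neg_add_rev, add_re, neg_re, mul_re, ofReal_re, ofReal_im, mul_zero,
    sub_zero, natCast_re, sub_re, I_re, zero_mul, I_im, sub_self, natCast_im, sub_im, mul_im,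
    one_mul, zero_add, zero_sub, mul_neg, neg_zero, add_zero, add_im]
  ring

variable {ℓ θ n s}

theorem one_sub_term_ne_zero (hℓ : ∀ i, 0 < ℓ i) (hs : 0 < n + s.re) (x : (ι × ℕ) × ℕ) :
    1 - term ℓ θ n s x ≠ 0 := by
  have hlt : ‖term ℓ θ n s x‖ < 1 := by
    rw [norm_term, Real.exp_lt_one_iff]
    nlinarith [hℓ x.1.1, Nat.cast_nonneg (α := ℝ) x.1.2, Nat.cast_nonneg (α := ℝ) x.2]
  exact sub_ne_zero.2 fun h => by simp [← h] at hlt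

end ZografProduct

theorem statement8_general {I : Type*} (ℓ θ : I → ℝ)
    (hℓ : ∀ i, 0 < ℓ i) (δ : ℝ) (hδ : δ < 2)
    (hsum : Summable fun i => Real.exp (-δ * ℓ i))
    (n : ℕ) (s : ℂ) (hs : 2 - (n : ℝ) < s.re) :
    (Multipliable fun x : I × {k : ℕ // n ≤ k} =>
      (1 - Complex.exp (-((x.2 : ℕ) : ℂ) * ((ℓ x.1 : ℂ) + Complex.I * (θ x.1 : ℂ)))
         * Complex.exp (-s * (ℓ x.1 : ℂ)))) ∧
    Zs ℓ θ (-2 * ((n : ℤ) - 1)) (s + (n : ℂ) + 1) ≠ 0 ∧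
    (∏' x : I × {k : ℕ // n ≤ k},
        (1 - Complex.exp (-((x.2 : ℕ) : ℂ) * ((ℓ x.1 : ℂ) + Complex.I * (θ x.1 : ℂ)))
           * Complex.exp (-s * (ℓ x.1 : ℂ)))) =
      Zs ℓ θ (-2 * (n : ℤ)) (s + (n : ℂ)) /
        Zs ℓ θ (-2 * ((n : ℤ) - 1)) (s + (n : ℂ) + 1) := by
  open ZografProduct in
  obtain ⟨c, hc, hcℓ⟩ := exists_pos_le_of_summable_exp hℓ hsum
  have hw : Summable (‖term ℓ θ n s ·‖) := by
    simpa only [norm_term] using summable_exp_neg_nat_add_mul hc hcℓ hsum (by linarith)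
  have hw₀ : Summable fun b : I × ℕ => ‖term ℓ θ n s (b, 0)‖ :=
    hw.comp_injective (Prod.mk_left_injective 0)
  have hw₁ : Summable fun x : (I × ℕ) × ℕ => ‖term ℓ θ n s (x.1, x.2 + 1)‖ :=
    hw.comp_injective fun x y h => by simpa [Prod.ext_iff] using h
  have hM₀ := multipliable_one_sub_of_summable hw₀
  have hM₁ := multipliable_one_sub_of_summable hw₁
  have hB : ∏' x : (I × ℕ) × ℕ, (1 - term ℓ θ n s (x.1, x.2 + 1)) ≠ 0 :=
    tprod_one_sub_ne_zero_of_summable hw₁ fun _ => one_sub_term_ne_zero hℓ (by linarith) _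
  have hF := one_sub_exp_mul_exp_eq_one_sub_term ℓ θ n s
  let e := (Equiv.refl I).prodCongr (natEquivSubtypeLE n)
  refine ⟨e.multipliable_iff.1 (hM₀.congr fun b => (hF b).symm),
    Zs_eq_tprod_term_succ ℓ θ n s ▸ hB, ?_⟩
  rw [Zs_eq_tprod_term, Zs_eq_tprod_term_succ,
    tprod_prod_nat_eq_zero_mul (f := fun x => 1 - term ℓ θ n s x) hM₀ hM₁,
    mul_div_cancel_right₀ _ hB, ← e.tprod_eq]
  exact tprod_congr hF

/-- the Zograf-type product `F_n(s) = ∏_{k ≥ n} R(σ_{−2k}, s+k)` converges for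
`Re(s) > 2 − n` and equals `Z(−2n, s+n) / Z(−2(n−1), s+n+1)`. -/
theorem statement8 {I : Type*} [Countable I] (ℓ θ : I → ℝ)
    (hℓ : ∀ i, 0 < ℓ i) (δ : ℝ) (hδ : δ < 2)
    (hsum : Summable fun i => Real.exp (-δ * ℓ i))
    (n : ℕ) (hn : 1 ≤ n) (s : ℂ) (hs : 2 - (n : ℝ) < s.re) :
    (Multipliable fun x : I × {k : ℕ // n ≤ k} =>
      (1 - Complex.exp (-((x.2 : ℕ) : ℂ) * ((ℓ x.1 : ℂ) + Complex.I * (θ x.1 : ℂ)))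
         * Complex.exp (-s * (ℓ x.1 : ℂ)))) ∧
    Zs ℓ θ (-2 * ((n : ℤ) - 1)) (s + (n : ℂ) + 1) ≠ 0 ∧
    (∏' x : I × {k : ℕ // n ≤ k},
        (1 - Complex.exp (-((x.2 : ℕ) : ℂ) * ((ℓ x.1 : ℂ) + Complex.I * (θ x.1 : ℂ)))
           * Complex.exp (-s * (ℓ x.1 : ℂ)))) =
      Zs ℓ θ (-2 * (n : ℤ)) (s + (n : ℂ)) /
        Zs ℓ θ (-2 * ((n : ℤ) - 1)) (s + (n : ℂ) + 1) :=
  statement8_general ℓ θ hℓ δ hδ hsum n s hs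
end

section
/- (Zograf-type infinite product G_n as a ratio of Selberg zeta functions.) Let n ∈ ℕ (n ≥ 0 allowed) and s ∈ ℂ with Re(s) > 3/2 − n. Then the family over (i, k) ∈ I × {k ∈ ℕ : k ≥ n} given by (1 − exp(−(k + 1/2)(ℓ i + i·θ i))·exp(−s·ℓ i)) is multipliable; denoting its product by G_n(s) = ∏_{k ≥ n} R(−(2k+1), s + k + 1/2), one has Z(−(2n−1), s + n + 3/2) ≠ 0 and G_n(s) = Z(−(2n+1), s + n + 1/2) / Z(−(2n−1), s + n + 3/2). -/
/-!
Split the Selberg product `Z(-(2n+1), s+n+1/2)` according to whether `q = 0` or `q ≥ 1`.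
Removing one factor `e^{-(ℓ-iθ)} = e^{-ℓ} e^{iθ}` from a term with `q ≥ 1` shifts `s` by `1` and
the weight `k` by `2`, so these terms reassemble into `Z(-(2n-1), s+n+3/2)`; the `q = 0` terms,
reindexed by `k = p + n`, are exactly the factors of `G_n(s)`. All products involved converge
absolutely, because `ℓ` is bounded away from `0` and the critical exponent is `< 2 ≤ Re(s+n+1/2)`,
and none of their factors vanishes, so the Selberg products are nonzero.
-/

section OneSub

variable {ι R : Type*} [NormedCommRing R] [NormOneClass R] [CompleteSpace R] {f : ι → R}

lemma multipliable_one_sub_of_summable_norm (hf : Summable (‖f ·‖)) :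
    Multipliable (1 - f ·) := by
  simpa only [sub_eq_add_neg] using
    multipliable_one_add_of_summable (f := (-f ·)) (by simpa only [norm_neg] using hf)

lemma tprod_one_sub_ne_zero_of_summable_norm [NormMulClass R] (hf1 : ∀ i, f i ≠ 1)
    (hf : Summable (‖f ·‖)) : ∏' i, (1 - f i) ≠ 0 := by
  simpa only [sub_eq_add_neg] using
    tprod_one_add_ne_zero_of_summable (f := (-f ·))
      (fun i => by simpa only [← sub_eq_add_neg, sub_ne_zero] using (hf1 i).symm)
      (by simpa only [norm_neg] using hf)

end OneSub

section LengthSpectrum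

variable {I : Type*} {ℓ : I → ℝ} {δ : ℝ}

lemma exists_pos_forall_le_of_summable_exp (hℓ : ∀ i, 0 < ℓ i)
    (hsum : Summable fun i => Real.exp (-δ * ℓ i)) : ∃ m > 0, ∀ i, m ≤ ℓ i := by
  -- where `ℓ i ≤ 1` the summand is at least `e^{-|δ|}`
  have hfin : {i | ℓ i ≤ 1}.Finite := by
    refine (Filter.eventually_cofinite.mp <| hsum.tendsto_cofinite_zero.eventually
      (gt_mem_nhds (Real.exp_pos (-|δ|)))).subset fun i (hi : ℓ i ≤ 1) => ?_
    refine not_lt.mpr (Real.exp_le_exp.mpr ?_)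
    nlinarith [le_abs_self δ, abs_nonneg δ, hℓ i]
  rcases Set.eq_empty_or_nonempty {i | ℓ i ≤ 1} with hempty | hne
  · refine ⟨1, one_pos, fun i => le_of_lt (not_le.mp fun hi => ?_)⟩
    exact (Set.eq_empty_iff_forall_notMem.mp hempty) i hi
  · obtain ⟨a, ha, hmin⟩ := Set.exists_min_image _ ℓ hfin hne
    refine ⟨ℓ a, hℓ a, fun i => ?_⟩
    by_cases hi : ℓ i ≤ 1
    · exact hmin i hi
    · exact ha.out.trans (le_of_not_ge hi)

lemma summable_exp_neg_add_mul (hℓ : ∀ i, 0 < ℓ i)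
    (hsum : Summable fun i => Real.exp (-δ * ℓ i)) {c : ℝ} (hc : δ ≤ c) :
    Summable fun x : I × ℕ × ℕ => Real.exp (-((x.2.1 : ℝ) + x.2.2 + c) * ℓ x.1) := by
  obtain ⟨m, hm, hmℓ⟩ := exists_pos_forall_le_of_summable_exp hℓ hsum
  have hgeom : Summable fun p : ℕ => Real.exp (-m) ^ p :=
    summable_geometric_of_lt_one (Real.exp_pos _).le (Real.exp_lt_one_iff.mpr (by linarith))
  have hbound := hsum.mul_of_nonneg (hgeom.mul_of_nonneg hgeom (fun _ => by positivity)
    (fun _ => by positivity)) (fun _ => by positivity) (fun _ => by positivity)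
  -- `e^{-(p+q+c)ℓ} ≤ e^{-δℓ} e^{-pm} e^{-qm}` since `c ≥ δ` and `ℓ ≥ m`
  refine hbound.of_nonneg_of_le (fun _ => by positivity) fun ⟨i, p, q⟩ => ?_
  simp only [← Real.exp_nat_mul, ← Real.exp_add]
  refine Real.exp_le_exp.mpr ?_
  have hp : (p : ℝ) * m ≤ p * ℓ i := mul_le_mul_of_nonneg_left (hmℓ i) p.cast_nonneg
  have hq : (q : ℝ) * m ≤ q * ℓ i := mul_le_mul_of_nonneg_left (hmℓ i) q.cast_nonneg
  nlinarith [hℓ i]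

end LengthSpectrum

def lastZeroOrSuccEquiv (I : Type*) : (I × ℕ) ⊕ (I × ℕ × ℕ) ≃ I × ℕ × ℕ where
  toFun := Sum.elim (fun y => (y.1, y.2, 0)) (fun x => (x.1, x.2.1, x.2.2 + 1))
  invFun
    | (i, p, 0) => .inl (i, p)
    | (i, p, q + 1) => .inr (i, p, q)
  left_inv := by rintro (⟨i, p⟩ | ⟨i, p, q⟩) <;> rfl
  right_inv := by rintro ⟨i, p, _ | q⟩ <;> rfl

def natLeEquivNat (n : ℕ) : {k : ℕ // n ≤ k} ≃ ℕ where
  toFun k := k - n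
  invFun p := ⟨p + n, Nat.le_add_left n p⟩
  left_inv k := Subtype.ext (Nat.sub_add_cancel k.2)
  right_inv p := Nat.add_sub_cancel p n

section Selberg

variable {I : Type*} (ℓ θ : I → ℝ)

noncomputable def zetaTerm (k : ℤ) (s : ℂ) (x : I × ℕ × ℕ) : ℂ :=
  Complex.exp (Complex.I * ((k : ℂ) / 2) * (θ x.1 : ℂ))
    * Complex.exp (-(x.2.1 : ℂ) * ((ℓ x.1 : ℂ) + Complex.I * (θ x.1 : ℂ)))
    * Complex.exp (-(x.2.2 : ℂ) * ((ℓ x.1 : ℂ) - Complex.I * (θ x.1 : ℂ)))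
    * Complex.exp (-s * (ℓ x.1 : ℂ))

/-- `G_n(s) = ∏_{i ∈ I, k ≥ n} (1 - zografTerm ℓ θ s i k)`. -/
noncomputable def zografTerm (s : ℂ) (i : I) (k : ℕ) : ℂ :=
  Complex.exp (-((k : ℂ) + 1 / 2) * ((ℓ i : ℂ) + Complex.I * (θ i : ℂ)))
    * Complex.exp (-s * (ℓ i : ℂ))

lemma Zs_eq_tprod_zetaTerm (k : ℤ) (s : ℂ) :
    Zs ℓ θ k s = ∏' x : I × ℕ × ℕ, (1 - zetaTerm ℓ θ k s x) := rfl

lemma norm_zetaTerm (k : ℤ) (s : ℂ) (x : I × ℕ × ℕ) :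
    ‖zetaTerm ℓ θ k s x‖ = Real.exp (-((x.2.1 : ℝ) + x.2.2 + s.re) * ℓ x.1) := by
  simp only [zetaTerm, ← Complex.exp_add, Complex.norm_exp]
  congr 1
  simp only [Complex.add_re, Complex.sub_re, Complex.mul_re, Complex.neg_re, Complex.div_ofNat_re,
    Complex.add_im, Complex.sub_im, Complex.mul_im, Complex.neg_im, Complex.div_ofNat_im,
    Complex.I_re, Complex.I_im, Complex.ofReal_re, Complex.ofReal_im, Complex.natCast_re,
    Complex.natCast_im, Complex.intCast_re, Complex.intCast_im]
  ring

lemma zetaTerm_succ (k : ℤ) (s : ℂ) (i : I) (p q : ℕ) :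
    zetaTerm ℓ θ k s (i, p, q + 1) = zetaTerm ℓ θ (k + 2) (s + 1) (i, p, q) := by
  simp only [zetaTerm, ← Complex.exp_add]
  congr 1
  push_cast
  ring

lemma zetaTerm_zero_eq_zografTerm (n : ℕ) (s : ℂ) (i : I) (p : ℕ) :
    zetaTerm ℓ θ (-(2 * (n : ℤ) + 1)) (s + n + 1 / 2) (i, p, 0) = zografTerm ℓ θ s i (p + n) := by
  simp only [zetaTerm, zografTerm, ← Complex.exp_add]
  congr 1
  push_cast
  ring

variable {ℓ} {δ : ℝ}

lemma summable_norm_zetaTerm (hℓ : ∀ i, 0 < ℓ i) (hsum : Summable fun i => Real.exp (-δ * ℓ i))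
    (k : ℤ) {s : ℂ} (hs : δ ≤ s.re) : Summable (‖zetaTerm ℓ θ k s ·‖) := by
  simpa only [norm_zetaTerm] using summable_exp_neg_add_mul hℓ hsum hs

lemma zetaTerm_ne_one (hℓ : ∀ i, 0 < ℓ i) (k : ℤ) {s : ℂ} (hs : 0 < s.re) (x : I × ℕ × ℕ) :
    zetaTerm ℓ θ k s x ≠ 1 := by
  refine fun h => (congrArg norm h).not_lt ?_
  rw [norm_zetaTerm, norm_one, Real.exp_lt_one_iff]
  have hx : 0 < (x.2.1 : ℝ) + x.2.2 + s.re := by positivity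
  simpa only [neg_mul, neg_lt_zero] using mul_pos hx (hℓ x.1)

lemma Zs_ne_zero (hℓ : ∀ i, 0 < ℓ i) (hsum : Summable fun i => Real.exp (-δ * ℓ i)) (k : ℤ)
    {s : ℂ} (hδs : δ ≤ s.re) (hs : 0 < s.re) : Zs ℓ θ k s ≠ 0 :=
  tprod_one_sub_ne_zero_of_summable_norm (zetaTerm_ne_one θ hℓ k hs)
    (summable_norm_zetaTerm θ hℓ hsum k hδs)

lemma Zs_eq_tprod_mul_Zs_add {k : ℤ} {s : ℂ} (h : Summable (‖zetaTerm ℓ θ k s ·‖)) :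
    Zs ℓ θ k s = (∏' y : I × ℕ, (1 - zetaTerm ℓ θ k s (y.1, y.2, 0))) * Zs ℓ θ (k + 2) (s + 1) := by
  let e := lastZeroOrSuccEquiv I
  have hinl := h.comp_injective (e.injective.comp Sum.inl_injective)
  have hinr := h.comp_injective (e.injective.comp Sum.inr_injective)
  rw [Zs_eq_tprod_zetaTerm ℓ θ k s, ← e.tprod_eq (fun x => 1 - zetaTerm ℓ θ k s x),
    Multipliable.tprod_sum (f := fun c => 1 - zetaTerm ℓ θ k s (e c))
      (multipliable_one_sub_of_summable_norm hinl) (multipliable_one_sub_of_summable_norm hinr)]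
  congr 1
  exact tprod_congr fun ⟨i, p, q⟩ => congrArg (1 - ·) (zetaTerm_succ ℓ θ k s i p q)

lemma multipliable_and_tprod_zografTerm (hℓ : ∀ i, 0 < ℓ i)
    (hsum : Summable fun i => Real.exp (-δ * ℓ i)) (n : ℕ) {s : ℂ}
    (hs : δ ≤ (s + n + 1 / 2).re) :
    (Multipliable fun x : I × {k : ℕ // n ≤ k} => 1 - zografTerm ℓ θ s x.1 x.2) ∧
      ∏' x : I × {k : ℕ // n ≤ k}, (1 - zografTerm ℓ θ s x.1 x.2) =
        ∏' y : I × ℕ, (1 - zetaTerm ℓ θ (-(2 * (n : ℤ) + 1)) (s + n + 1 / 2) (y.1, y.2, 0)) := by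
  let e := (Equiv.refl I).prodCongr (natLeEquivNat n)
  have hterm (x : I × {k : ℕ // n ≤ k}) : zografTerm ℓ θ s x.1 x.2 =
      zetaTerm ℓ θ (-(2 * (n : ℤ) + 1)) (s + n + 1 / 2) (x.1, x.2 - n, 0) := by
    rw [zetaTerm_zero_eq_zografTerm, Nat.sub_add_cancel x.2.2]
  have hinj : Function.Injective fun x : I × {k : ℕ // n ≤ k} => ((x.1, x.2 - n, 0) : I × ℕ × ℕ) :=
    ((lastZeroOrSuccEquiv I).injective.comp Sum.inl_injective).comp e.injective
  refine ⟨?_, ?_⟩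
  · simpa only [hterm] using multipliable_one_sub_of_summable_norm
      ((summable_norm_zetaTerm θ hℓ hsum _ hs).comp_injective hinj)
  · simp only [hterm]
    exact e.tprod_eq (fun y => 1 - zetaTerm ℓ θ _ _ (y.1, y.2, 0))

end Selberg

theorem statement9_general {I : Type*} (ℓ θ : I → ℝ)
    (hℓ : ∀ i, 0 < ℓ i) (δ : ℝ) (hδ : δ < 2)
    (hsum : Summable fun i => Real.exp (-δ * ℓ i))
    (n : ℕ) (s : ℂ) (hs : 3 / 2 - (n : ℝ) < s.re) :
    (Multipliable fun x : I × {k : ℕ // n ≤ k} =>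
      (1 - Complex.exp (-(((x.2 : ℕ) : ℂ) + 1 / 2) * ((ℓ x.1 : ℂ) + Complex.I * (θ x.1 : ℂ)))
         * Complex.exp (-s * (ℓ x.1 : ℂ)))) ∧
    Zs ℓ θ (-(2 * (n : ℤ) - 1)) (s + (n : ℂ) + 3 / 2) ≠ 0 ∧
    (∏' x : I × {k : ℕ // n ≤ k},
        (1 - Complex.exp (-(((x.2 : ℕ) : ℂ) + 1 / 2) * ((ℓ x.1 : ℂ) + Complex.I * (θ x.1 : ℂ)))
           * Complex.exp (-s * (ℓ x.1 : ℂ)))) =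
      Zs ℓ θ (-(2 * (n : ℤ) + 1)) (s + (n : ℂ) + 1 / 2) /
        Zs ℓ θ (-(2 * (n : ℤ) - 1)) (s + (n : ℂ) + 3 / 2) := by
  have hre₁ : (s + n + 1 / 2).re = s.re + n + 1 / 2 := by
    simp only [Complex.add_re, Complex.natCast_re, Complex.div_ofNat_re, Complex.one_re]
  have hre₂ : (s + n + 3 / 2).re = s.re + n + 3 / 2 := by
    simp only [Complex.add_re, Complex.natCast_re, Complex.div_ofNat_re, Complex.re_ofNat]
  have hδ₁ : δ ≤ (s + n + 1 / 2).re := by linarith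
  have hδ₂ : δ ≤ (s + n + 3 / 2).re := by linarith
  have hpos₂ : 0 < (s + n + 3 / 2).re := by linarith
  have hk : -(2 * (n : ℤ) + 1) + 2 = -(2 * (n : ℤ) - 1) := by ring
  have hs' : s + n + 1 / 2 + 1 = s + n + 3 / 2 := by ring
  have hZ := Zs_ne_zero θ hℓ hsum (-(2 * (n : ℤ) - 1)) hδ₂ hpos₂
  have hsplit := Zs_eq_tprod_mul_Zs_add θ (summable_norm_zetaTerm θ hℓ hsum (-(2 * n + 1)) hδ₁)
  rw [hk, hs'] at hsplit
  obtain ⟨hmul, hG⟩ := multipliable_and_tprod_zografTerm θ hℓ hsum n hδ₁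
  exact ⟨hmul, hZ, eq_div_of_mul_eq hZ (hG ▸ hsplit.symm)⟩

/-- the Zograf-type product `G_n(s) = ∏_{k ≥ n} R(σ_{−(2k+1)}, s+k+1/2)` converges
for `Re(s) > 3/2 − n` and equals `Z(−(2n+1), s+n+1/2) / Z(−(2n−1), s+n+3/2)`. -/
theorem statement9 {I : Type*} [Countable I] (ℓ θ : I → ℝ)
    (hℓ : ∀ i, 0 < ℓ i) (δ : ℝ) (hδ : δ < 2)
    (hsum : Summable fun i => Real.exp (-δ * ℓ i))
    (n : ℕ) (s : ℂ) (hs : 3 / 2 - (n : ℝ) < s.re) :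
    (Multipliable fun x : I × {k : ℕ // n ≤ k} =>
      (1 - Complex.exp (-(((x.2 : ℕ) : ℂ) + 1 / 2) * ((ℓ x.1 : ℂ) + Complex.I * (θ x.1 : ℂ)))
         * Complex.exp (-s * (ℓ x.1 : ℂ)))) ∧
    Zs ℓ θ (-(2 * (n : ℤ) - 1)) (s + (n : ℂ) + 3 / 2) ≠ 0 ∧
    (∏' x : I × {k : ℕ // n ≤ k},
        (1 - Complex.exp (-(((x.2 : ℕ) : ℂ) + 1 / 2) * ((ℓ x.1 : ℂ) + Complex.I * (θ x.1 : ℂ)))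
           * Complex.exp (-s * (ℓ x.1 : ℂ)))) =
      Zs ℓ θ (-(2 * (n : ℤ) + 1)) (s + (n : ℂ) + 1 / 2) /
        Zs ℓ θ (-(2 * (n : ℤ) - 1)) (s + (n : ℂ) + 3 / 2) :=
  statement9_general ℓ θ hℓ δ hδ hsum n s hs
end
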